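/- arXiv:1505.05125 — 2 statements merged into one kernel-verified Lean document; each statement's English description precedes it below -/
import Mathlib

section
/- (Hoffman–Wielandt-type continuity bound) For Hermitian d×d matrices A and B with eigenvalues λ_1(A) ≥ ... ≥ λ_d(A) and λ_1(B) ≥ ... ≥ λ_d(B), the Euclidean norm of the vector (λ_i(A) - λ_i(B))_{i=1}^d is at most the Frobenius norm of A - B. -/
open Matrix Finset

/-- Rearrangement-type bound for doubly stochastic matrices (via Birkhoff's theorem). -/
lemma hw_ds_bound {d : ℕ} (a b : Fin d → ℝ) (ha : Antitone a) (hb : Antitone b)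
    (S : Matrix (Fin d) (Fin d) ℝ) (hS : S ∈ doublyStochastic ℝ (Fin d)) :
    ∑ i, ∑ j, S i j * (a i * b j) ≤ ∑ i, a i * b i := by
  obtain ⟨w, hw0, hw1, hwS⟩ := exists_eq_sum_perm_of_mem_doublyStochastic hS
  have hperm : ∀ σ : Equiv.Perm (Fin d),
      ∑ i, ∑ j, (σ.permMatrix ℝ) i j * (a i * b j) ≤ ∑ i, a i * b i := by
    intro σ
    have : ∀ i : Fin d, ∑ j, (σ.permMatrix ℝ) i j * (a i * b j) = a i * b (σ i) := by
      intro i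
      rw [Finset.sum_eq_single (σ i)]
      · simp [Equiv.Perm.permMatrix, PEquiv.toMatrix_apply, Equiv.toPEquiv_apply]
      · intro j _ hj
        simp [Equiv.Perm.permMatrix, PEquiv.toMatrix_apply, Equiv.toPEquiv_apply, Ne.symm hj]
      · simp
    rw [Finset.sum_congr rfl fun i _ => this i]
    exact (ha.monovary hb).sum_mul_comp_perm_le_sum_mul (σ := σ)
  have hSij : ∀ i j, S i j * (a i * b j)
      = ∑ σ : Equiv.Perm (Fin d), w σ * ((σ.permMatrix ℝ) i j * (a i * b j)) := by
    intro i j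
    have : S i j = ∑ σ : Equiv.Perm (Fin d), w σ * (σ.permMatrix ℝ) i j := by
      rw [← hwS, Matrix.sum_apply]; simp
    rw [this, Finset.sum_mul]
    exact Finset.sum_congr rfl fun σ _ => by ring
  calc ∑ i, ∑ j, S i j * (a i * b j)
      = ∑ i, ∑ j, ∑ σ : Equiv.Perm (Fin d), w σ * ((σ.permMatrix ℝ) i j * (a i * b j)) :=
        Finset.sum_congr rfl fun i _ => Finset.sum_congr rfl fun j _ => hSij i j
    _ = ∑ i, ∑ σ : Equiv.Perm (Fin d), ∑ j, w σ * ((σ.permMatrix ℝ) i j * (a i * b j)) :=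
        Finset.sum_congr rfl fun i _ => Finset.sum_comm
    _ = ∑ σ : Equiv.Perm (Fin d), ∑ i, ∑ j, w σ * ((σ.permMatrix ℝ) i j * (a i * b j)) :=
        Finset.sum_comm
    _ = ∑ σ : Equiv.Perm (Fin d), w σ * ∑ i, ∑ j, (σ.permMatrix ℝ) i j * (a i * b j) := by
        simp [Finset.mul_sum]
    _ ≤ ∑ σ : Equiv.Perm (Fin d), w σ * (∑ i, a i * b i) := by
        refine Finset.sum_le_sum fun σ _ => mul_le_mul_of_nonneg_left (hperm σ) (hw0 σ)
    _ = ∑ i, a i * b i := by rw [← Finset.sum_mul, hw1, one_mul]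

/-- The entrywise squared norms of a unitary matrix form a doubly stochastic matrix. -/
lemma hw_unitary_ds {d : ℕ} (W : Matrix (Fin d) (Fin d) ℂ)
    (hW : W ∈ Matrix.unitaryGroup (Fin d) ℂ) :
    (Matrix.of fun i j => Complex.normSq (W i j)) ∈ doublyStochastic ℝ (Fin d) := by
  rw [mem_doublyStochastic_iff_sum]
  refine ⟨fun i j => Complex.normSq_nonneg _, fun i => ?_, fun j => ?_⟩
  · have h1 : (W * star W) i i = 1 := by
      rw [(Matrix.mem_unitaryGroup_iff).mp hW]; simp
    have : (∑ j, (Complex.normSq (W i j) : ℂ)) = 1 := by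
      rw [← h1, Matrix.mul_apply]
      exact Finset.sum_congr rfl fun j _ => by
        simp [Matrix.star_apply, Complex.mul_conj]
    exact_mod_cast congrArg Complex.re this
  · have h1 : (star W * W) j j = 1 := by
      rw [(Matrix.mem_unitaryGroup_iff').mp hW]; simp
    have : (∑ i, (Complex.normSq (W i j) : ℂ)) = 1 := by
      rw [← h1, Matrix.mul_apply]
      exact Finset.sum_congr rfl fun i _ => by
        simp [Matrix.star_apply, Complex.normSq_eq_conj_mul_self]
    exact_mod_cast congrArg Complex.re this

/-- Trace of a product of Hermitian matrices, in terms of eigenvalues and the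
relative unitary. -/
lemma hw_trace_mul {d : ℕ} (A B : Matrix (Fin d) (Fin d) ℂ)
    (hA : A.IsHermitian) (hB : B.IsHermitian) :
    (A * B).trace.re = ∑ i, ∑ j,
      Complex.normSq (((star (hA.eigenvectorUnitary : Matrix (Fin d) (Fin d) ℂ)) *
        (hB.eigenvectorUnitary : Matrix (Fin d) (Fin d) ℂ)) i j) *
      (hA.eigenvalues i * hB.eigenvalues j) := by
  set U : Matrix (Fin d) (Fin d) ℂ := (hA.eigenvectorUnitary : Matrix (Fin d) (Fin d) ℂ) with hU
  set V : Matrix (Fin d) (Fin d) ℂ := (hB.eigenvectorUnitary : Matrix (Fin d) (Fin d) ℂ) with hV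
  set W : Matrix (Fin d) (Fin d) ℂ := star U * V with hW
  set Da : Matrix (Fin d) (Fin d) ℂ := diagonal ((RCLike.ofReal : ℝ → ℂ) ∘ hA.eigenvalues) with hDa
  set Db : Matrix (Fin d) (Fin d) ℂ := diagonal ((RCLike.ofReal : ℝ → ℂ) ∘ hB.eigenvalues) with hDb
  have key : (A * B).trace = (Da * (W * (Db * star W))).trace := by
    conv_lhs => rw [hA.spectral_theorem, hB.spectral_theorem, Unitary.conjStarAlgAut_apply,
      Unitary.conjStarAlgAut_apply]
    rw [show (U * Da * star U) * (V * Db * star V)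
        = U * (Da * (star U * V * (Db * star V))) by
      simp only [Matrix.mul_assoc]]
    rw [Matrix.trace_mul_comm]
    congr 1
    rw [Matrix.star_mul, star_star, hW]
    simp only [Matrix.mul_assoc]
  rw [key]
  rw [Matrix.trace]
  rw [Complex.re_sum]
  refine Finset.sum_congr rfl fun i _ => ?_
  have : (Da * (W * (Db * star W))).diag i
      = ∑ j, (hA.eigenvalues i : ℂ) * (W i j * ((hB.eigenvalues j : ℂ) * star (W i j))) := by
    rw [Matrix.diag_apply, hDa, Matrix.diagonal_mul, Matrix.mul_apply]
    rw [Finset.mul_sum]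
    refine Finset.sum_congr rfl fun j _ => ?_
    rw [hDb, Matrix.diagonal_mul]
    simp only [Matrix.star_apply, Function.comp_apply,
      show ∀ x : ℝ, (RCLike.ofReal x : ℂ) = (x : ℂ) from fun _ => rfl]
  rw [this, Complex.re_sum]
  refine Finset.sum_congr rfl fun j _ => ?_
  have : (hA.eigenvalues i : ℂ) * (W i j * ((hB.eigenvalues j : ℂ) * star (W i j)))
      = ((Complex.normSq (W i j) * (hA.eigenvalues i * hB.eigenvalues j) : ℝ) : ℂ) := by
    push_cast
    rw [show (hA.eigenvalues i : ℂ) * (W i j * ((hB.eigenvalues j : ℂ) * star (W i j)))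
        = (W i j * star (W i j)) * ((hA.eigenvalues i : ℂ) * (hB.eigenvalues j : ℂ)) by ring]
    simp [Matrix.star_apply, Complex.mul_conj]
  rw [this, Complex.ofReal_re]

/-- Trace of the square of a Hermitian matrix equals the sum of squared eigenvalues. -/
lemma hw_trace_sq {d : ℕ} (A : Matrix (Fin d) (Fin d) ℂ) (hA : A.IsHermitian) :
    (A * A).trace.re = ∑ i, hA.eigenvalues i ^ 2 := by
  rw [hw_trace_mul A A hA hA]
  have h1 : star (hA.eigenvectorUnitary : Matrix (Fin d) (Fin d) ℂ) *
      (hA.eigenvectorUnitary : Matrix (Fin d) (Fin d) ℂ) = 1 :=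
    (Matrix.mem_unitaryGroup_iff').mp (SetLike.coe_mem _)
  rw [h1]
  refine Finset.sum_congr rfl fun i _ => ?_
  rw [Finset.sum_eq_single i]
  · simp [Matrix.one_apply]; ring
  · intro j _ hj
    simp [Matrix.one_apply, Ne.symm hj]
  · simp

/-- Hoffman–Wielandt-type bound: for Hermitian `A`, `B` with eigenvalues listed in
decreasing order as `a` and `b`, the Euclidean norm of `(a i - b i)_i` is at most the
Frobenius norm of `A - B`. -/
theorem hoffman_wielandt_hermitian
    (d : ℕ) (A B : Matrix (Fin d) (Fin d) ℂ)
    (hA : A.IsHermitian) (hB : B.IsHermitian)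
    (a b : Fin d → ℝ) (ha : Antitone a) (hb : Antitone b)
    (haeig : ∃ σ : Equiv.Perm (Fin d), a = hA.eigenvalues ∘ σ)
    (hbeig : ∃ σ : Equiv.Perm (Fin d), b = hB.eigenvalues ∘ σ) :
    Real.sqrt (∑ i : Fin d, (a i - b i) ^ 2) ≤
      Real.sqrt (((A - B)ᴴ * (A - B)).trace.re) := by
  obtain ⟨σ, hσ⟩ := haeig
  obtain ⟨τ, hτ⟩ := hbeig
  set α : Fin d → ℝ := hA.eigenvalues with hα
  set β : Fin d → ℝ := hB.eigenvalues with hβ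
  set U : Matrix (Fin d) (Fin d) ℂ := (hA.eigenvectorUnitary : Matrix (Fin d) (Fin d) ℂ) with hU
  set V : Matrix (Fin d) (Fin d) ℂ := (hB.eigenvectorUnitary : Matrix (Fin d) (Fin d) ℂ) with hV
  set W : Matrix (Fin d) (Fin d) ℂ := star U * V with hW
  have hWmem : W ∈ Matrix.unitaryGroup (Fin d) ℂ :=
    mul_mem (Unitary.star_mem (SetLike.coe_mem hA.eigenvectorUnitary))
      (SetLike.coe_mem hB.eigenvectorUnitary)
  set S : Matrix (Fin d) (Fin d) ℝ := Matrix.of fun i j => Complex.normSq (W i j) with hS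
  have hSds : S ∈ doublyStochastic ℝ (Fin d) := hw_unitary_ds W hWmem
  set S' : Matrix (Fin d) (Fin d) ℝ := Matrix.of fun i j => S (σ i) (τ j) with hS'
  have hS'ds : S' ∈ doublyStochastic ℝ (Fin d) := by
    rw [mem_doublyStochastic_iff_sum]
    refine ⟨fun i j => nonneg_of_mem_doublyStochastic hSds, fun i => ?_, fun j => ?_⟩
    · rw [show (∑ j, S' i j) = ∑ j, S (σ i) (τ j) from rfl, Equiv.sum_comp τ (S (σ i))]
      exact sum_row_of_mem_doublyStochastic hSds _
    · rw [show (∑ i, S' i j) = ∑ i, S (σ i) (τ j) from rfl,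
        Equiv.sum_comp σ (fun i => S i (τ j))]
      exact sum_col_of_mem_doublyStochastic hSds _
  -- trace identity
  have htr : ((A - B)ᴴ * (A - B)).trace.re
      = ∑ i, α i ^ 2 + ∑ j, β j ^ 2 - 2 * ∑ i, ∑ j, S i j * (α i * β j) := by
    rw [hA.sub hB]
    have expand : (A - B) * (A - B) = A * A - A * B - B * A + B * B := by
      rw [Matrix.sub_mul, Matrix.mul_sub, Matrix.mul_sub]
      abel
    rw [expand, Matrix.trace_add, Matrix.trace_sub, Matrix.trace_sub,
      Matrix.trace_mul_comm B A]
    have hAB : (A * B).trace.re = ∑ i, ∑ j, S i j * (α i * β j) := by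
      rw [hw_trace_mul A B hA hB]; rfl
    simp only [Complex.add_re, Complex.sub_re]
    rw [hw_trace_sq A hA, hw_trace_sq B hB, hAB]
    ring
  -- sums transported through the permutations
  have hsa : ∑ i, a i ^ 2 = ∑ i, α i ^ 2 := by
    rw [hσ]; exact Equiv.sum_comp σ (fun i => α i ^ 2)
  have hsb : ∑ i, b i ^ 2 = ∑ i, β i ^ 2 := by
    rw [hτ]; exact Equiv.sum_comp τ (fun i => β i ^ 2)
  have hsS : ∑ i, ∑ j, S' i j * (a i * b j) = ∑ i, ∑ j, S i j * (α i * β j) := by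
    rw [hσ, hτ]
    rw [show (∑ i, ∑ j, S' i j * ((α ∘ σ) i * (β ∘ τ) j))
        = ∑ i, ∑ j, S (σ i) (τ j) * (α (σ i) * β (τ j)) from rfl]
    rw [← Equiv.sum_comp σ (fun i => ∑ j, S i j * (α i * β j))]
    exact Finset.sum_congr rfl fun i _ =>
      (Equiv.sum_comp τ (fun j => S (σ i) j * (α (σ i) * β j))).symm ▸
        (Equiv.sum_comp τ (fun j => S (σ i) j * (α (σ i) * β j))).symm
  -- final inequality
  have hkey : ∑ i : Fin d, (a i - b i) ^ 2 ≤ ((A - B)ᴴ * (A - B)).trace.re := by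
    have hre : ∑ i : Fin d, (a i - b i) ^ 2
        = ∑ i, a i ^ 2 + ∑ i, b i ^ 2 - 2 * ∑ i, a i * b i := by
      rw [Finset.sum_congr rfl fun i (_ : i ∈ Finset.univ) =>
        (by ring : (a i - b i) ^ 2 = a i ^ 2 + b i ^ 2 - 2 * (a i * b i))]
      rw [Finset.sum_sub_distrib, Finset.sum_add_distrib, Finset.mul_sum]
    have hds := hw_ds_bound a b ha hb S' hS'ds
    rw [htr, hre, ← hsa, ← hsb, ← hsS]
    linarith
  exact Real.sqrt_le_sqrt hkey
end

section
/- Let A be a d×d Hermitian matrix with d distinct eigenvalues, let u ∈ C^d be a vector all of whose coordinates in the eigenbasis of A are nonzero, and let r be a nonzero real number. Then A and B = A + r u u* have no common eigenvalue, i.e. spec(A) ∩ spec(A + r u u*) = ∅. -/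
open Matrix

lemma mem_spectrum_iff_exists_mulVec {d : ℕ} (M : Matrix (Fin d) (Fin d) ℂ) (μ : ℂ) :
    μ ∈ spectrum ℂ M ↔ ∃ x : Fin d → ℂ, x ≠ 0 ∧ M *ᵥ x = μ • x := by
  rw [spectrum.mem_iff, Matrix.isUnit_iff_isUnit_det, isUnit_iff_ne_zero, not_not,
    ← Matrix.exists_mulVec_eq_zero_iff]
  constructor
  · rintro ⟨x, hx, hMx⟩
    refine ⟨x, hx, ?_⟩
    have := hMx
    rw [Matrix.sub_mulVec] at this
    have h1 : (algebraMap ℂ (Matrix (Fin d) (Fin d) ℂ) μ) *ᵥ x = μ • x := by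
      simp [Algebra.algebraMap_eq_smul_one, Matrix.smul_mulVec]
    rw [h1, sub_eq_zero] at this
    exact this.symm
  · rintro ⟨x, hx, hMx⟩
    refine ⟨x, hx, ?_⟩
    rw [Matrix.sub_mulVec]
    have h1 : (algebraMap ℂ (Matrix (Fin d) (Fin d) ℂ) μ) *ᵥ x = μ • x := by
      simp [Algebra.algebraMap_eq_smul_one, Matrix.smul_mulVec]
    rw [h1, hMx, sub_self]

/-- Special Hermitian case of the rank-one perturbation theorem of Ran–Wojtylak: if `A` is
Hermitian with `d` distinct eigenvalues (equivalently, its minimal polynomial has degree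
`d`), `r` is a nonzero real number, and `u ∈ ℂ^d` has nonzero coordinates in an orthonormal
eigenbasis of `A`, then `A` and `A + r u u*` have no common eigenvalue. -/
theorem rank_one_perturbation_disjoint_spectrum
    (d : ℕ) (A : Matrix (Fin d) (Fin d) ℂ) (hA : A.IsHermitian)
    (hsimple : Function.Injective hA.eigenvalues)
    (hmin : (minpoly ℂ A).natDegree = d)
    (r : ℝ) (hr : r ≠ 0) (u : Fin d → ℂ)
    (hcoord : ∀ i : Fin d, star u ⬝ᵥ (fun j => hA.eigenvectorBasis i j) ≠ 0) :
    spectrum ℂ A ∩ spectrum ℂ (A + (r : ℂ) • vecMulVec u (star u)) = ∅ := by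
  ext μ
  simp only [Set.mem_inter_iff, Set.mem_empty_iff_false, iff_false, not_and]
  intro hμA hμB
  set e : Fin d → Fin d → ℂ := fun i => fun j => hA.eigenvectorBasis i j with he
  -- orthonormality
  have horth : ∀ i j : Fin d, star (e i) ⬝ᵥ e j = if i = j then 1 else 0 := by
    intro i j
    have := hA.eigenvectorBasis.orthonormal
    rw [orthonormal_iff_ite] at this
    have h := this i j
    rw [← h]
    simp [EuclideanSpace.inner_eq_star_dotProduct, dotProduct, mul_comm, he]
  -- A acts on e i
  have hAe : ∀ i, A *ᵥ e i = (hA.eigenvalues i : ℂ) • e i := by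
    intro i
    simpa [he] using hA.mulVec_eigenvectorBasis i
  -- μ is an eigenvalue of A: μ = eigenvalues i for some i
  obtain ⟨x, hx0, hx⟩ := (mem_spectrum_iff_exists_mulVec A μ).mp hμA
  -- coefficient identity: for any vector y with A y = μ y, (eigenvalues j) * (⟨e j, y⟩) = μ * ⟨e j, y⟩
  have key : ∀ (y : Fin d → ℂ), A *ᵥ y = μ • y →
      ∀ j, (hA.eigenvalues j : ℂ) * (star (e j) ⬝ᵥ y) = μ * (star (e j) ⬝ᵥ y) := by
    intro y hy j
    have h1 : star (e j) ⬝ᵥ (A *ᵥ y) = (hA.eigenvalues j : ℂ) * (star (e j) ⬝ᵥ y) := by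
      have : star (e j) ⬝ᵥ (A *ᵥ y) = (star (e j) ᵥ* A) ⬝ᵥ y := by
        rw [Matrix.dotProduct_mulVec]
      rw [this]
      have h2 : star (e j) ᵥ* A = (hA.eigenvalues j : ℂ) • star (e j) := by
        have h3 : star (A *ᵥ e j) = star ((hA.eigenvalues j : ℂ) • e j) := by rw [hAe j]
        have h4 : star (A *ᵥ e j) = star (e j) ᵥ* Aᴴ := by
          rw [Matrix.star_mulVec]
        rw [hA.eq] at h4
        rw [← h4, h3, star_smul]
        simp [Complex.star_def, Complex.conj_ofReal]
      rw [h2]; simp [smul_dotProduct, smul_eq_mul]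
    rw [hy] at h1
    simp only [dotProduct_smul, smul_eq_mul] at h1
    rw [← h1]
  obtain ⟨i, hi⟩ : ∃ i, star (e i) ⬝ᵥ x ≠ 0 := by
    by_contra h
    push_neg at h
    apply hx0
    -- x = 0 since all coefficients vanish
    have : (hA.eigenvectorBasis).repr ((WithLp.equiv 2 _).symm x) = 0 := by
      ext j
      have := h j
      rw [hA.eigenvectorBasis.repr_apply_apply]
      simp only [EuclideanSpace.inner_eq_star_dotProduct] at *
      simpa [dotProduct, mul_comm] using h j
    have := (hA.eigenvectorBasis).repr.map_eq_zero_iff.mp this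
    simpa using congrArg (WithLp.equiv 2 (Fin d → ℂ)) this
  have hμ : μ = (hA.eigenvalues i : ℂ) := by
    have := key x hx i
    exact (mul_right_cancel₀ hi this).symm
  -- now use the eigenvector of B
  obtain ⟨y, hy0, hy⟩ := (mem_spectrum_iff_exists_mulVec _ μ).mp hμB
  rw [Matrix.add_mulVec, Matrix.smul_mulVec] at hy
  have hvv : vecMulVec u (star u) *ᵥ y = (star u ⬝ᵥ y) • u := by
    ext j
    simp [Matrix.vecMulVec, Matrix.mulVec, dotProduct, Finset.sum_mul, Finset.mul_sum, mul_comm,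
      mul_left_comm]
  rw [hvv] at hy
  by_cases hc : star u ⬝ᵥ y = 0
  · -- then A y = μ y, so y is multiple of e i
    rw [hc, zero_smul, smul_zero, add_zero] at hy
    have hcoef : ∀ j, j ≠ i → star (e j) ⬝ᵥ y = 0 := by
      intro j hj
      have := key y hy j
      rw [hμ] at this
      by_contra hne
      have h9 : hA.eigenvalues j = hA.eigenvalues i := by
        exact_mod_cast mul_right_cancel₀ hne this
      exact hj (hsimple h9)
    -- y = c • e i with c = ⟨e i, y⟩
    have hrep : y = (star (e i) ⬝ᵥ y) • e i := by
      have hsum := hA.eigenvectorBasis.sum_repr ((WithLp.equiv 2 (Fin d → ℂ)).symm y)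
      have hco : ∀ j, hA.eigenvectorBasis.repr ((WithLp.equiv 2 (Fin d → ℂ)).symm y) j =
          star (e j) ⬝ᵥ y := by
        intro j
        rw [hA.eigenvectorBasis.repr_apply_apply]
        simp [EuclideanSpace.inner_eq_star_dotProduct, dotProduct, mul_comm, he]
      rw [Finset.sum_eq_single i (fun j _ hj => by rw [hco j, hcoef j hj, zero_smul])
        (by simp)] at hsum
      funext k
      have hk := congrArg (fun z : EuclideanSpace ℂ (Fin d) => z k) hsum
      simp only [hco, PiLp.smul_apply, smul_eq_mul] at hk
      simp only [WithLp.equiv_symm_apply, PiLp.toLp_apply] at hk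
      simpa [he, smul_eq_mul] using hk.symm
    have : star u ⬝ᵥ y = (star (e i) ⬝ᵥ y) * (star u ⬝ᵥ e i) := by
      conv_lhs => rw [hrep]
      simp [dotProduct_smul]
    rw [hc] at this
    have hci : star (e i) ⬝ᵥ y ≠ 0 := by
      intro h
      apply hy0
      rw [hrep, h, zero_smul]
    exact (hcoord i) (by
      rcases mul_eq_zero.mp this.symm with h | h
      · exact absurd h hci
      · exact h)
  · -- take inner product with e i
    have h1 := congrArg (fun z => star (e i) ⬝ᵥ z) hy
    simp only [dotProduct_add, dotProduct_smul] at h1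
    have h2 : star (e i) ⬝ᵥ (A *ᵥ y) = μ * (star (e i) ⬝ᵥ y) := by
      have := key -- reuse structure
      have h3 : star (e i) ⬝ᵥ (A *ᵥ y) = (hA.eigenvalues i : ℂ) * (star (e i) ⬝ᵥ y) := by
        rw [Matrix.dotProduct_mulVec]
        have h4 : star (e i) ᵥ* A = (hA.eigenvalues i : ℂ) • star (e i) := by
          have h5 : star (A *ᵥ e i) = star (e i) ᵥ* Aᴴ := Matrix.star_mulVec _ _
          rw [hA.eq] at h5
          rw [← h5, hAe i, star_smul]
          simp [Complex.star_def, Complex.conj_ofReal]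
        rw [h4]; simp [smul_dotProduct, smul_eq_mul]
      rw [h3, hμ]
    rw [h2] at h1
    have h6 : (r : ℂ) * ((star u ⬝ᵥ y) * (star (e i) ⬝ᵥ u)) = 0 := by
      have h' := h1
      simp only [smul_eq_mul] at h'
      linear_combination h'
    have hr' : (r : ℂ) ≠ 0 := by exact_mod_cast hr
    rcases mul_eq_zero.mp h6 with h | h
    · exact hr' h
    rcases mul_eq_zero.mp h with h | h
    · exact hc h
    · -- star (e i) ⬝ᵥ u = 0 contradicts hcoord via conjugation
      apply hcoord i
      have h8 : (star u ⬝ᵥ fun j => hA.eigenvectorBasis i j) = star (star (e i) ⬝ᵥ u) := by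
        simp [he, dotProduct, Complex.star_def, mul_comm]
      rw [h8, h, star_zero]
end
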